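/- Fix positive integers N, K, P, β > 0, set β' = 2β/P!, and fix r ∈ (0,1], with the random patterns ξ and examples η^{μ,a} as in the context. For each M ≥ 1 define the dense supervised free energy A_{N,M} = (1/N)·E[ log ∑_{σ∈{−1,+1}^N} exp( (β'/(2·N^{P−1}·R_M^{P/2}))·∑_{μ=1}^K ( ∑_{i=1}^N ((1/M)·∑_{a=1}^M η_i^{μ,a})·σ_i )^P ) ] and the dense Hebbian storage free energy A_N = (1/N)·E[ log ∑_{σ∈{−1,+1}^N} exp( (β'/(2·N^{P−1}))·∑_{μ=1}^K ( ∑_{i=1}^N ξ_i^μ σ_i )^P ) ]. Then lim_{M→∞} A_{N,M} = A_N. -/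

import Mathlib

open Finset MeasureTheory ProbabilityTheory Filter

/-- The embedding of a Boolean spin into `ℝ`. -/
noncomputable def spin : Bool → ℝ := fun b => if b then 1 else -1

/-- integrability of bounded measurable real functions on finite measure space -/
lemma integrable_of_bdd {Ω : Type} [MeasurableSpace Ω] {μ : Measure Ω} [IsFiniteMeasure μ]
    {f : Ω → ℝ} (hm : Measurable f) (C : ℝ) (h : ∀ ω, |f ω| ≤ C) : Integrable f μ :=
  ⟨hm.aestronglyMeasurable, HasFiniteIntegral.of_bounded (C := C)
    (Filter.Eventually.of_forall (by simpa [Real.norm_eq_abs] using h))⟩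

/-- log-sum-exp Lipschitz bound -/
lemma logsumexp_lip {ι : Type*} [Fintype ι] [Nonempty ι] (x y : ι → ℝ) (c : ℝ)
    (h : ∀ σ, |x σ - y σ| ≤ c) :
    |Real.log (∑ σ, Real.exp (x σ)) - Real.log (∑ σ, Real.exp (y σ))| ≤ c := by
  have key : ∀ u v : ι → ℝ, (∀ σ, u σ - v σ ≤ c) →
      Real.log (∑ σ, Real.exp (u σ)) - Real.log (∑ σ, Real.exp (v σ)) ≤ c := by
    intro u v huv
    have hpos : (0:ℝ) < ∑ σ, Real.exp (v σ) :=
      Finset.sum_pos (fun σ _ => Real.exp_pos _) Finset.univ_nonempty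
    have hle : (∑ σ, Real.exp (u σ)) ≤ Real.exp c * ∑ σ, Real.exp (v σ) := by
      rw [Finset.mul_sum]
      refine Finset.sum_le_sum fun σ _ => ?_
      rw [← Real.exp_add]
      exact Real.exp_le_exp.2 (by linarith [huv σ])
    have := Real.log_le_log (Finset.sum_pos (fun σ _ => Real.exp_pos _) Finset.univ_nonempty) hle
    rw [Real.log_mul (Real.exp_ne_zero c) (ne_of_gt hpos), Real.log_exp] at this
    linarith
  rw [abs_sub_le_iff]
  constructor
  · exact key x y fun σ => by have := h σ; rw [abs_sub_le_iff] at this; exact this.1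
  · exact key y x fun σ => by have := h σ; rw [abs_sub_le_iff] at this; exact this.2

/-- |a^n - b^n| ≤ n * B^(n-1) * |a-b| -/
lemma abs_pow_sub_pow_le' (a b B : ℝ) (n : ℕ) (ha : |a| ≤ B) (hb : |b| ≤ B) :
    |a ^ n - b ^ n| ≤ n * B ^ (n - 1) * |a - b| := by
  have hB : 0 ≤ B := le_trans (abs_nonneg a) ha
  rw [← geom_sum₂_mul a b n, abs_mul]
  gcongr
  calc |∑ i ∈ Finset.range n, a ^ i * b ^ (n - 1 - i)|
      ≤ ∑ i ∈ Finset.range n, |a ^ i * b ^ (n - 1 - i)| := Finset.abs_sum_le_sum_abs _ _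
    _ ≤ ∑ i ∈ Finset.range n, B ^ (n - 1) := by
        refine Finset.sum_le_sum fun i hi => ?_
        rw [abs_mul, abs_pow, abs_pow]
        have hin : i ≤ n - 1 := Nat.le_sub_one_of_lt (Finset.mem_range.1 hi)
        calc |a| ^ i * |b| ^ (n - 1 - i) ≤ B ^ i * B ^ (n - 1 - i) := by
              gcongr
          _ = B ^ (n - 1) := by rw [← pow_add]; congr 1; omega
    _ = n * B ^ (n - 1) := by rw [Finset.sum_const, Finset.card_range, nsmul_eq_mul]

/-- bound on the log partition function -/
lemma log_partition_bd {ι : Type*} [Fintype ι] [Nonempty ι] (x : ι → ℝ) (C : ℝ)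
    (h : ∀ σ, |x σ| ≤ C) :
    |Real.log (∑ σ, Real.exp (x σ))| ≤ C + |Real.log (Fintype.card ι)| := by
  have h0 := logsumexp_lip x (fun _ => 0) C (by simpa using h)
  have hcard : Real.log (∑ _σ : ι, Real.exp 0) = Real.log (Fintype.card ι) := by simp
  calc |Real.log (∑ σ, Real.exp (x σ))|
      = |(Real.log (∑ σ, Real.exp (x σ)) - Real.log (∑ _σ : ι, Real.exp 0))
          + Real.log (∑ _σ : ι, Real.exp 0)| := by rw [sub_add_cancel]
    _ ≤ |Real.log (∑ σ, Real.exp (x σ)) - Real.log (∑ _σ : ι, Real.exp 0)|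
          + |Real.log (∑ _σ : ι, Real.exp 0)| := abs_add_le _ _
    _ ≤ C + |Real.log (Fintype.card ι)| := by
        rw [← hcard]; exact add_le_add (by simpa using h0) le_rfl

/-- E|X| ≤ t when E X² ≤ t², via AM-GM. -/
lemma integral_abs_le_of_sq {Ω : Type} [MeasurableSpace Ω] {μ : Measure Ω} [IsProbabilityMeasure μ]
    {X : Ω → ℝ} (hm : Measurable X) (B : ℝ) (hb : ∀ ω, |X ω| ≤ B)
    {t : ℝ} (ht : 0 < t) (hvar : ∫ ω, X ω ^ 2 ∂μ ≤ t ^ 2) :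
    ∫ ω, |X ω| ∂μ ≤ t := by
  have hint1 : Integrable (fun ω => |X ω|) μ :=
    integrable_of_bdd hm.abs B (fun ω => by simpa using hb ω)
  have hint2 : Integrable (fun ω => X ω ^ 2) μ :=
    integrable_of_bdd (hm.pow_const 2) (B ^ 2) (fun ω => by
      rw [abs_pow, ← sq_abs]; exact pow_le_pow_left₀ (abs_nonneg _) (by simpa using hb ω) 2)
  have hmono : ∫ ω, |X ω| ∂μ ≤ ∫ ω, (X ω ^ 2 + t ^ 2) * (2 * t)⁻¹ ∂μ := by
    refine integral_mono hint1 ((hint2.add (integrable_const _)).mul_const _) fun ω => ?_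
    rw [← div_eq_mul_inv, le_div_iff₀ (by positivity)]
    nlinarith [sq_nonneg (|X ω| - t), sq_abs (X ω)]
  have hcalc : ∫ ω, (X ω ^ 2 + t ^ 2) * (2 * t)⁻¹ ∂μ
      = ((∫ ω, X ω ^ 2 ∂μ) + t ^ 2) * (2 * t)⁻¹ := by
    rw [integral_mul_const, integral_add hint2 (integrable_const _), integral_const]
    simp
  rw [hcalc] at hmono
  have h2 : ((∫ ω, X ω ^ 2 ∂μ) + t ^ 2) * (2 * t)⁻¹ ≤ (t ^ 2 + t ^ 2) * (2 * t)⁻¹ := by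
    gcongr
  have heq : (t ^ 2 + t ^ 2) * (2 * t)⁻¹ = t := by field_simp; ring
  linarith

/-- absolute value of an integral -/
lemma abs_integral_le {Ω : Type} [MeasurableSpace Ω] (μ : Measure Ω) (f : Ω → ℝ) :
    |∫ ω, f ω ∂μ| ≤ ∫ ω, |f ω| ∂μ := by
  simpa [Real.norm_eq_abs] using norm_integral_le_integral_norm (μ := μ) f

/-- expectation of a ±1 random variable -/
lemma integral_pm {Ω : Type} [MeasurableSpace Ω] {μ : Measure Ω} [IsProbabilityMeasure μ]
    {X : Ω → ℝ} (hm : Measurable X) (hrange : ∀ ω, X ω = 1 ∨ X ω = -1)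
    {p : ℝ} (hp0 : 0 ≤ p) (hp1 : p ≤ 1) (h1 : μ {ω | X ω = 1} = ENNReal.ofReal p) :
    ∫ ω, X ω ∂μ = 2 * p - 1 := by
  have hA : MeasurableSet {ω | X ω = 1} := hm (measurableSet_singleton 1)
  have hint : Integrable X μ := integrable_of_bdd hm 1
    (fun ω => by rcases hrange ω with h | h <;> simp [h])
  have hsplit := integral_add_compl hA hint
  have e1 : ∫ ω in {ω | X ω = 1}, X ω ∂μ = p := by
    rw [setIntegral_congr_fun hA (g := fun _ => (1:ℝ)) (fun ω hω => hω)]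
    rw [setIntegral_const, smul_eq_mul, mul_one, measureReal_def, h1, ENNReal.toReal_ofReal hp0]
  have e2 : ∫ ω in {ω | X ω = 1}ᶜ, X ω ∂μ = -(1 - p) := by
    rw [setIntegral_congr_fun hA.compl (g := fun _ => (-1:ℝ))
      (fun ω hω => by simpa using (hrange ω).resolve_left hω)]
    rw [setIntegral_const, smul_eq_mul, mul_neg_one, measureReal_def, prob_compl_eq_one_sub hA, h1]
    rw [ENNReal.toReal_sub_of_le (by simpa using ENNReal.ofReal_le_one.2 hp1) (by simp)]
    simp [ENNReal.toReal_ofReal hp0]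
  rw [← hsplit, e1, e2]; ring

set_option maxHeartbeats 2000000 in
/-- in the big-data limit `M → ∞`, the free energy of the dense
supervised Hebbian learning network converges to the free energy of the dense
Hebbian storage network. -/
theorem dense_supervised_free_energy_tendsto_storage
    (N K P : ℕ) (hN : 0 < N) (hK : 0 < K) (hP : 0 < P)
    (β β' r : ℝ) (hβ : 0 < β) (hβ' : β' = 2 * β / (Nat.factorial P : ℝ))
    (hr0 : 0 < r) (hr1 : r ≤ 1)
    {Ω : Type} [MeasurableSpace Ω] (μ : Measure Ω) [IsProbabilityMeasure μ]
    (ξ : Fin N → Fin K → Ω → ℝ) (χ : Fin N → Fin K → ℕ → Ω → ℝ)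
    (hmeasξ : ∀ i k, Measurable (ξ i k))
    (hmeasχ : ∀ i k a, Measurable (χ i k a))
    (hrangeξ : ∀ i k ω, ξ i k ω = 1 ∨ ξ i k ω = -1)
    (hrangeχ : ∀ i k a ω, χ i k a ω = 1 ∨ χ i k a ω = -1)
    (hlawξ : ∀ i k, μ {ω | ξ i k ω = 1} = ENNReal.ofReal (1 / 2)
      ∧ μ {ω | ξ i k ω = -1} = ENNReal.ofReal (1 / 2))
    (hlawχ : ∀ i k a, μ {ω | χ i k a ω = 1} = ENNReal.ofReal ((1 + r) / 2)
      ∧ μ {ω | χ i k a ω = -1} = ENNReal.ofReal ((1 - r) / 2))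
    (hindep : iIndepFun
      (Sum.elim (fun q : Fin N × Fin K => ξ q.1 q.2)
        (fun q : Fin N × Fin K × ℕ => χ q.1 q.2.1 q.2.2)) μ)
    (η : Fin N → Fin K → ℕ → Ω → ℝ)
    (hη : ∀ i k a ω, η i k a ω = χ i k a ω * ξ i k ω)
    (R : ℕ → ℝ) (hR : ∀ M, R M = r ^ 2 + (1 - r ^ 2) / (M : ℝ))
    (ASup : ℕ → ℝ)
    (hASup : ∀ M, ASup M = (1 / (N : ℝ)) * ∫ ω,
      Real.log (∑ σ : Fin N → Bool, Real.exp
        ((β' / (2 * (N : ℝ) ^ (P - 1) * R M ^ ((P : ℝ) / 2))) *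
          ∑ k : Fin K,
            (∑ i : Fin N, ((1 / (M : ℝ)) * ∑ a ∈ Finset.range M, η i k a ω)
              * spin (σ i)) ^ P)) ∂μ)
    (AStor : ℝ)
    (hAStor : AStor = (1 / (N : ℝ)) * ∫ ω,
      Real.log (∑ σ : Fin N → Bool, Real.exp
        ((β' / (2 * (N : ℝ) ^ (P - 1))) *
          ∑ k : Fin K, (∑ i : Fin N, ξ i k ω * spin (σ i)) ^ P)) ∂μ) :
    Tendsto ASup atTop (nhds AStor) := by
  classical
  have hNr : (0:ℝ) < N := by exact_mod_cast hN
  have hβ'pos : 0 < β' := by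
    rw [hβ']
    have : (0:ℝ) < (Nat.factorial P : ℝ) := by exact_mod_cast Nat.factorial_pos P
    positivity
  have hr2 : r ^ 2 ≤ 1 := by nlinarith
  obtain ⟨c, hcdef⟩ : ∃ c : ℝ, c = β' / (2 * (N:ℝ) ^ (P - 1)) := ⟨_, rfl⟩
  have hc : 0 < c := by
    rw [hcdef]
    have : (0:ℝ) < (N:ℝ) ^ (P - 1) := pow_pos hNr _
    positivity
  obtain ⟨CC, hCC⟩ : ∃ CC : ℝ, CC = c * (P:ℝ) * ((N:ℝ)/r) ^ (P - 1) / r := ⟨_, rfl⟩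
  have hCC0 : 0 ≤ CC := by
    rw [hCC]
    have h1 : 0 ≤ ((N:ℝ)/r) ^ (P - 1) := by positivity
    positivity
  have hξbd : ∀ i k ω, |ξ i k ω| ≤ 1 := fun i k ω => by
    rcases hrangeξ i k ω with h | h <;> simp [h]
  have hχbd : ∀ i k a ω, |χ i k a ω| ≤ 1 := fun i k a ω => by
    rcases hrangeχ i k a ω with h | h <;> simp [h]
  have hspin : ∀ b, |spin b| ≤ 1 := fun b => by cases b <;> simp [spin]
  have hχint : ∀ i k a, Integrable (χ i k a) μ := fun i k a =>
    integrable_of_bdd (hmeasχ i k a) 1 (hχbd i k a)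
  have hEχ : ∀ i k a, ∫ ω, χ i k a ω ∂μ = r := by
    intro i k a
    have h := integral_pm (hmeasχ i k a) (hrangeχ i k a) (p := (1+r)/2)
      (by linarith) (by linarith) (hlawχ i k a).1
    rw [h]; ring
  have hYbd : ∀ i k a ω, |χ i k a ω - r| ≤ 2 := by
    intro i k a ω
    rcases hrangeχ i k a ω with h | h <;> rw [h, abs_le] <;> constructor <;> linarith
  have hYYint : ∀ i k a b, Integrable (fun ω => (χ i k a ω - r) * (χ i k b ω - r)) μ := by
    intro i k a b
    refine integrable_of_bdd (((hmeasχ i k a).sub measurable_const).mul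
      ((hmeasχ i k b).sub measurable_const)) 4 (fun ω => ?_)
    rw [abs_mul]
    calc |χ i k a ω - r| * |χ i k b ω - r| ≤ 2 * 2 := by
          exact mul_le_mul (hYbd i k a ω) (hYbd i k b ω) (abs_nonneg _) (by norm_num)
      _ = 4 := by norm_num
  have hEYY : ∀ i k a b, a ≠ b → ∫ ω, (χ i k a ω - r) * (χ i k b ω - r) ∂μ = 0 := by
    intro i k a b hab
    have hind : IndepFun (χ i k a) (χ i k b) μ := by
      have h := hindep.indepFun
        (show (Sum.inr (i,k,a) : (Fin N × Fin K) ⊕ (Fin N × Fin K × ℕ)) ≠ Sum.inr (i,k,b) by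
          simp [hab])
      exact h
    have habint : Integrable (fun ω => χ i k a ω * χ i k b ω) μ :=
      integrable_of_bdd ((hmeasχ i k a).mul (hmeasχ i k b)) 1 (fun ω => by
        rw [abs_mul]
        exact mul_le_one₀ (hχbd i k a ω) (abs_nonneg _) (hχbd i k b ω))
    have hmul : ∫ ω, χ i k a ω * χ i k b ω ∂μ = r * r := by
      have h := hind.integral_mul_eq_mul_integral (hχint i k a).aestronglyMeasurable
        (hχint i k b).aestronglyMeasurable
      rw [hEχ, hEχ] at h
      simpa [Pi.mul_apply] using h
    have hexp : ∀ ω, (χ i k a ω - r) * (χ i k b ω - r)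
        = χ i k a ω * χ i k b ω - r * χ i k a ω - r * χ i k b ω + r^2 := fun ω => by ring
    calc ∫ ω, (χ i k a ω - r) * (χ i k b ω - r) ∂μ
        = ∫ ω, (χ i k a ω * χ i k b ω - r * χ i k a ω - r * χ i k b ω + r^2) ∂μ :=
          integral_congr_ae (Filter.Eventually.of_forall hexp)
      _ = 0 := by
          have Ia : Integrable (fun ω => r * χ i k a ω) μ := (hχint i k a).const_mul r
          have Ib : Integrable (fun ω => r * χ i k b ω) μ := (hχint i k b).const_mul r
          have I1 : Integrable (fun ω => χ i k a ω * χ i k b ω - r * χ i k a ω) μ :=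
            habint.sub Ia
          have I2 : Integrable
              (fun ω => χ i k a ω * χ i k b ω - r * χ i k a ω - r * χ i k b ω) μ := I1.sub Ib
          rw [integral_add I2 (integrable_const _), integral_sub I1 Ib,
            integral_sub habint Ia, integral_const_mul, integral_const_mul, hmul, hEχ, hEχ,
            integral_const]
          simp
          ring
  have hEY2 : ∀ i k a, ∫ ω, (χ i k a ω - r) * (χ i k a ω - r) ∂μ = 1 - r^2 := by
    intro i k a
    have hexp : ∀ ω, (χ i k a ω - r) * (χ i k a ω - r) = (1 + r^2) - (2*r) * χ i k a ω := by
      intro ω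
      rcases hrangeχ i k a ω with h | h <;> rw [h] <;> ring
    calc ∫ ω, (χ i k a ω - r) * (χ i k a ω - r) ∂μ
        = ∫ ω, ((1 + r^2) - (2*r) * χ i k a ω) ∂μ :=
          integral_congr_ae (Filter.Eventually.of_forall hexp)
      _ = (1 + r^2) - 2*r*r := by
          rw [integral_sub (integrable_const _) ((hχint i k a).const_mul (2*r)),
            integral_const, integral_const_mul, hEχ]
          simp
      _ = 1 - r^2 := by ring
  have hSmeas : ∀ i k (M : ℕ),
      Measurable (fun ω => (1/(M:ℝ)) * ∑ a ∈ Finset.range M, (χ i k a ω - r)) :=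
    fun i k M => (Finset.measurable_sum _ fun a _ =>
      (hmeasχ i k a).sub measurable_const).const_mul _
  have hSbd : ∀ i k (M : ℕ) ω,
      |(1/(M:ℝ)) * ∑ a ∈ Finset.range M, (χ i k a ω - r)| ≤ 2 := by
    intro i k M ω
    rcases Nat.eq_zero_or_pos M with hM | hM
    · simp [hM]
    have hM0 : (0:ℝ) < M := by exact_mod_cast hM
    rw [abs_mul, abs_of_pos (by positivity : (0:ℝ) < 1/(M:ℝ))]
    calc (1/(M:ℝ)) * |∑ a ∈ Finset.range M, (χ i k a ω - r)|
        ≤ (1/(M:ℝ)) * ((M:ℝ) * 2) := by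
          gcongr
          refine le_trans (Finset.abs_sum_le_sum_abs _ _) ?_
          calc ∑ a ∈ Finset.range M, |χ i k a ω - r| ≤ ∑ _a ∈ Finset.range M, 2 :=
                Finset.sum_le_sum fun a _ => hYbd i k a ω
            _ = (M:ℝ) * 2 := by simp [mul_comm]
      _ = 2 := by field_simp
  have hES2 : ∀ i k (M : ℕ), 1 ≤ M →
      ∫ ω, ((1/(M:ℝ)) * ∑ a ∈ Finset.range M, (χ i k a ω - r))^2 ∂μ ≤ 2/(M:ℝ) := by
    intro i k M hM1
    have hM0 : (0:ℝ) < M := by exact_mod_cast hM1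
    have hexp : ∀ ω, ((1/(M:ℝ)) * ∑ a ∈ Finset.range M, (χ i k a ω - r))^2
        = (1/(M:ℝ))^2 * ∑ a ∈ Finset.range M, ∑ b ∈ Finset.range M,
            (χ i k a ω - r) * (χ i k b ω - r) := by
      intro ω
      rw [mul_pow, sq (∑ a ∈ Finset.range M, (χ i k a ω - r)), Finset.sum_mul_sum]
    rw [integral_congr_ae (Filter.Eventually.of_forall hexp), integral_const_mul,
      integral_finset_sum _ (fun a _ => integrable_finset_sum _ (fun b _ => hYYint i k a b))]
    have hrow : ∀ a ∈ Finset.range M,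
        (∫ ω, ∑ b ∈ Finset.range M, (χ i k a ω - r) * (χ i k b ω - r) ∂μ) = 1 - r^2 := by
      intro a ha
      rw [integral_finset_sum _ (fun b _ => hYYint i k a b)]
      rw [Finset.sum_eq_single a (fun b _ hba => hEYY i k a b (Ne.symm hba))
        (fun h => absurd ha h)]
      exact hEY2 i k a
    rw [Finset.sum_congr rfl hrow, Finset.sum_const, Finset.card_range, nsmul_eq_mul]
    have heq : (1/(M:ℝ))^2 * ((M:ℝ) * (1 - r^2)) = (1 - r^2)/(M:ℝ) := by
      field_simp
    rw [heq]
    gcongr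
    nlinarith [sq_nonneg r]
  have hEabsS : ∀ i k (M : ℕ), 1 ≤ M →
      ∫ ω, |(1/(M:ℝ)) * ∑ a ∈ Finset.range M, (χ i k a ω - r)| ∂μ
        ≤ Real.sqrt (2/(M:ℝ)) := by
    intro i k M hM1
    have hM0 : (0:ℝ) < M := by exact_mod_cast hM1
    refine integral_abs_le_of_sq (hSmeas i k M) 2 (hSbd i k M)
      (Real.sqrt_pos.2 (by positivity)) ?_
    rw [Real.sq_sqrt (by positivity : (0:ℝ) ≤ 2/(M:ℝ))]
    exact hES2 i k M hM1
  -- facts about R M and its square root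
  have hsfact : ∀ M : ℕ, 1 ≤ M → 0 < R M ∧ r ≤ Real.sqrt (R M) ∧
      Real.sqrt (R M) ^ 2 = R M ∧ R M ^ ((P:ℝ)/2) = Real.sqrt (R M) ^ P ∧
      Real.sqrt (R M) - r ≤ (1 - r^2)/((M:ℝ)*r) := by
    intro M hM1
    have hMr : (1:ℝ) ≤ (M:ℝ) := by exact_mod_cast hM1
    have hM0 : (0:ℝ) < (M:ℝ) := by linarith
    have hRM := hR M
    have hdiv : (0:ℝ) ≤ (1 - r^2)/(M:ℝ) := div_nonneg (by linarith) hM0.le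
    have hRpos : 0 < R M := by rw [hRM]; nlinarith
    have hsr : r ≤ Real.sqrt (R M) := by
      refine (Real.le_sqrt hr0.le hRpos.le).2 ?_
      rw [hRM]; linarith
    have hs0 : 0 < Real.sqrt (R M) := lt_of_lt_of_le hr0 hsr
    have hssq : Real.sqrt (R M) ^ 2 = R M := Real.sq_sqrt hRpos.le
    refine ⟨hRpos, hsr, hssq, ?_, ?_⟩
    · rw [Real.sqrt_eq_rpow, ← Real.rpow_natCast (R M ^ ((1:ℝ)/2)) P,
        ← Real.rpow_mul hRpos.le]
      congr 1
      push_cast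
      ring
    · rw [le_div_iff₀ (by positivity)]
      have hMs : (M:ℝ) * (Real.sqrt (R M))^2 = (M:ℝ) * r^2 + (1 - r^2) := by
        rw [hssq, hRM]; field_simp
      nlinarith [mul_nonneg (mul_nonneg hM0.le (sub_nonneg.2 hsr)) hs0.le]
  -- the pointwise difference bound
  have hmain : ∀ (M : ℕ), 1 ≤ M → ∀ ω : Ω,
      |Real.log (∑ σ : Fin N → Bool, Real.exp
        ((β' / (2 * (N : ℝ) ^ (P - 1) * R M ^ ((P : ℝ) / 2))) *
          ∑ k : Fin K,
            (∑ i : Fin N, ((1 / (M : ℝ)) * ∑ a ∈ Finset.range M, η i k a ω)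
              * spin (σ i)) ^ P))
      - Real.log (∑ σ : Fin N → Bool, Real.exp
        ((β' / (2 * (N : ℝ) ^ (P - 1))) *
          ∑ k : Fin K, (∑ i : Fin N, ξ i k ω * spin (σ i)) ^ P))|
      ≤ CC * ((∑ k : Fin K, ∑ i : Fin N,
            |(1/(M:ℝ)) * ∑ a ∈ Finset.range M, (χ i k a ω - r)|)
          + (K:ℝ) * ((1 - r^2)/((M:ℝ)*r) * N)) := by
    intro M hM1 ω
    obtain ⟨hRpos, hsr, hssq, hrpow, hsD⟩ := hsfact M hM1
    have hMr : (1:ℝ) ≤ (M:ℝ) := by exact_mod_cast hM1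
    have hM0 : (0:ℝ) < (M:ℝ) := by linarith
    have hs0 : 0 < Real.sqrt (R M) := lt_of_lt_of_le hr0 hsr
    have hD0 : 0 ≤ (1 - r^2)/((M:ℝ)*r) := div_nonneg (by linarith) (by positivity)
    have hcM : β' / (2 * (N:ℝ) ^ (P - 1) * R M ^ ((P:ℝ)/2)) = c / Real.sqrt (R M) ^ P := by
      rw [hrpow, hcdef, div_div]
    refine logsumexp_lip _ _ _ (fun σ => ?_)
    rw [hcM, show β' / (2 * (N:ℝ) ^ (P - 1)) = c from hcdef.symm]
    rw [Finset.mul_sum, Finset.mul_sum, ← Finset.sum_sub_distrib]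
    refine le_trans (Finset.abs_sum_le_sum_abs _ _) ?_
    have hbd : ∀ k : Fin K,
        |c / Real.sqrt (R M) ^ P *
            (∑ i : Fin N, ((1/(M:ℝ)) * ∑ a ∈ Finset.range M, η i k a ω) * spin (σ i)) ^ P
          - c * (∑ i : Fin N, ξ i k ω * spin (σ i)) ^ P|
        ≤ CC * ((∑ i : Fin N, |(1/(M:ℝ)) * ∑ a ∈ Finset.range M, (χ i k a ω - r)|)
            + (1 - r^2)/((M:ℝ)*r) * N) := by
      intro k
      set s : ℝ := Real.sqrt (R M) with hsdef
      set U : ℝ := ∑ i : Fin N, ((1/(M:ℝ)) * ∑ a ∈ Finset.range M, η i k a ω) * spin (σ i)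
        with hUdef
      set V : ℝ := ∑ i : Fin N, ξ i k ω * spin (σ i) with hVdef
      set T : ℝ := ∑ i : Fin N, |(1/(M:ℝ)) * ∑ a ∈ Finset.range M, (χ i k a ω - r)| with hTdef
      have hT0 : 0 ≤ T := Finset.sum_nonneg fun i _ => abs_nonneg _
      have hmbd : ∀ i : Fin N, |(1/(M:ℝ)) * ∑ a ∈ Finset.range M, η i k a ω| ≤ 1 := by
        intro i
        rw [abs_mul, abs_of_pos (by positivity : (0:ℝ) < 1/(M:ℝ))]
        have h1 : |∑ a ∈ Finset.range M, η i k a ω| ≤ (M:ℝ) := by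
          refine le_trans (Finset.abs_sum_le_sum_abs _ _) ?_
          calc ∑ a ∈ Finset.range M, |η i k a ω| ≤ ∑ _a ∈ Finset.range M, 1 := by
                refine Finset.sum_le_sum fun a _ => ?_
                rw [hη i k a ω, abs_mul]
                exact mul_le_one₀ (hχbd i k a ω) (abs_nonneg _) (hξbd i k ω)
            _ = (M:ℝ) := by simp
        calc (1/(M:ℝ)) * |∑ a ∈ Finset.range M, η i k a ω| ≤ (1/(M:ℝ)) * (M:ℝ) := by
              gcongr
          _ = 1 := by field_simp
      have hUbd : |U| ≤ (N:ℝ) := by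
        rw [hUdef]
        refine le_trans (Finset.abs_sum_le_sum_abs _ _) ?_
        calc ∑ i : Fin N, |((1/(M:ℝ)) * ∑ a ∈ Finset.range M, η i k a ω) * spin (σ i)|
            ≤ ∑ _i : Fin N, 1 := by
              refine Finset.sum_le_sum fun i _ => ?_
              rw [abs_mul]
              exact mul_le_one₀ (hmbd i) (abs_nonneg _) (hspin (σ i))
          _ = (N:ℝ) := by simp
      have hVbd : |V| ≤ (N:ℝ) := by
        rw [hVdef]
        refine le_trans (Finset.abs_sum_le_sum_abs _ _) ?_
        calc ∑ i : Fin N, |ξ i k ω * spin (σ i)| ≤ ∑ _i : Fin N, 1 := by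
              refine Finset.sum_le_sum fun i _ => ?_
              rw [abs_mul]
              exact mul_le_one₀ (hξbd i k ω) (abs_nonneg _) (hspin (σ i))
          _ = (N:ℝ) := by simp
      have hUs : |U/s| ≤ (N:ℝ)/r := by
        rw [abs_div, abs_of_pos hs0]
        exact div_le_div₀ (by positivity) hUbd hr0 hsr
      have hVr : |V| ≤ (N:ℝ)/r := by
        refine le_trans hVbd ?_
        rw [le_div_iff₀ hr0]
        nlinarith
      have hUrV : |U - r * V| ≤ T := by
        have heq : U - r * V = ∑ i : Fin N,
            ξ i k ω * ((1/(M:ℝ)) * ∑ a ∈ Finset.range M, (χ i k a ω - r)) * spin (σ i) := by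
          rw [hUdef, hVdef, Finset.mul_sum, ← Finset.sum_sub_distrib]
          refine Finset.sum_congr rfl fun i _ => ?_
          have hmi : (1/(M:ℝ)) * ∑ a ∈ Finset.range M, η i k a ω
              = r * ξ i k ω + ξ i k ω * ((1/(M:ℝ)) * ∑ a ∈ Finset.range M, (χ i k a ω - r)) := by
            have h1 : ∑ a ∈ Finset.range M, η i k a ω
                = ξ i k ω * ∑ a ∈ Finset.range M, χ i k a ω := by
              rw [Finset.mul_sum]
              exact Finset.sum_congr rfl fun a _ => by rw [hη i k a ω]; ring
            have h2 : ∑ a ∈ Finset.range M, (χ i k a ω - r)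
                = (∑ a ∈ Finset.range M, χ i k a ω) - (M:ℝ) * r := by
              rw [Finset.sum_sub_distrib, Finset.sum_const, Finset.card_range, nsmul_eq_mul]
            rw [h1, h2]
            field_simp
            ring
          rw [hmi]
          ring
        rw [heq, hTdef]
        refine le_trans (Finset.abs_sum_le_sum_abs _ _) (Finset.sum_le_sum fun i _ => ?_)
        rw [abs_mul, abs_mul]
        calc |ξ i k ω| * |(1/(M:ℝ)) * ∑ a ∈ Finset.range M, (χ i k a ω - r)| * |spin (σ i)|
            ≤ 1 * |(1/(M:ℝ)) * ∑ a ∈ Finset.range M, (χ i k a ω - r)| * 1 := by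
              gcongr
              · exact hξbd i k ω
              · exact hspin (σ i)
          _ = |(1/(M:ℝ)) * ∑ a ∈ Finset.range M, (χ i k a ω - r)| := by ring
      have key : |U/s - V| ≤ (T + (1 - r^2)/((M:ℝ)*r) * N)/r := by
        have h1 : U/s - V = (U - V*s)/s := by field_simp
        rw [h1, abs_div, abs_of_pos hs0]
        have h2 : |U - V*s| ≤ T + (1 - r^2)/((M:ℝ)*r) * N := by
          have h3 : U - V*s = (U - r*V) - V*(s - r) := by ring
          rw [h3]
          refine le_trans (abs_sub _ _) ?_
          refine add_le_add hUrV ?_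
          rw [abs_mul, abs_of_nonneg (sub_nonneg.2 hsr)]
          calc |V| * (s - r) ≤ (N:ℝ) * ((1 - r^2)/((M:ℝ)*r)) := by
                exact mul_le_mul hVbd hsD (sub_nonneg.2 hsr) (by positivity)
            _ = (1 - r^2)/((M:ℝ)*r) * N := by ring
        exact div_le_div₀ (by positivity) h2 hr0 hsr
      have hsplit : c / s ^ P * U ^ P = c * (U/s) ^ P := by
        rw [div_pow]
        ring
      calc |c / s ^ P * U ^ P - c * V ^ P| = c * |(U/s) ^ P - V ^ P| := by
            rw [hsplit, ← mul_sub, abs_mul, abs_of_pos hc]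
        _ ≤ c * ((P:ℝ) * ((N:ℝ)/r) ^ (P - 1) * |U/s - V|) :=
            mul_le_mul_of_nonneg_left (abs_pow_sub_pow_le' _ _ _ P hUs hVr) hc.le
        _ ≤ c * ((P:ℝ) * ((N:ℝ)/r) ^ (P - 1) * ((T + (1 - r^2)/((M:ℝ)*r) * N)/r)) := by
            have hNr' : (0:ℝ) ≤ ((N:ℝ)/r) ^ (P - 1) := by positivity
            gcongr
        _ = CC * (T + (1 - r^2)/((M:ℝ)*r) * N) := by
            rw [hCC]
            field_simp
    refine le_trans (Finset.sum_le_sum fun k (_ : k ∈ Finset.univ) => hbd k) ?_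
    rw [← Finset.mul_sum, Finset.sum_add_distrib, Finset.sum_const, Finset.card_univ,
      Fintype.card_fin, nsmul_eq_mul]
  -- measurability of integrands
  have hηmeas : ∀ i k a, Measurable (η i k a) := by
    intro i k a
    have h : η i k a = fun ω => χ i k a ω * ξ i k ω := funext (hη i k a)
    rw [h]
    exact (hmeasχ i k a).mul (hmeasξ i k)
  have hGmeas : Measurable (fun ω => Real.log (∑ σ : Fin N → Bool, Real.exp
      ((β' / (2 * (N:ℝ) ^ (P - 1))) *
        ∑ k : Fin K, (∑ i : Fin N, ξ i k ω * spin (σ i)) ^ P))) := by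
    apply Real.measurable_log.comp
    apply Finset.measurable_sum
    intro σ _
    apply Real.measurable_exp.comp
    apply Measurable.const_mul
    apply Finset.measurable_sum
    intro k _
    exact (Finset.measurable_sum _ fun i _ => (hmeasξ i k).mul_const _).pow_const _
  have hFmeas : ∀ M : ℕ, Measurable (fun ω => Real.log (∑ σ : Fin N → Bool, Real.exp
      ((β' / (2 * (N:ℝ) ^ (P - 1) * R M ^ ((P:ℝ)/2))) *
        ∑ k : Fin K, (∑ i : Fin N, ((1/(M:ℝ)) * ∑ a ∈ Finset.range M, η i k a ω)
          * spin (σ i)) ^ P))) := by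
    intro M
    apply Real.measurable_log.comp
    apply Finset.measurable_sum
    intro σ _
    apply Real.measurable_exp.comp
    apply Measurable.const_mul
    apply Finset.measurable_sum
    intro k _
    refine (Finset.measurable_sum _ fun i _ => Measurable.mul_const ?_ _).pow_const _
    exact (Finset.measurable_sum _ fun a _ => hηmeas i k a).const_mul _
  have habs_sum : ∀ (g : Fin N → ℝ), (∀ i, |g i| ≤ 1) → |∑ i : Fin N, g i| ≤ (N:ℝ) := by
    intro g hg
    refine le_trans (Finset.abs_sum_le_sum_abs _ _) ?_
    calc ∑ i : Fin N, |g i| ≤ ∑ _i : Fin N, 1 := Finset.sum_le_sum fun i _ => hg i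
      _ = (N:ℝ) := by simp
  have hSint : ∀ i k (M : ℕ),
      Integrable (fun ω => |(1/(M:ℝ)) * ∑ a ∈ Finset.range M, (χ i k a ω - r)|) μ :=
    fun i k M => integrable_of_bdd (hSmeas i k M).abs 2
      (fun ω => by rw [abs_abs]; exact hSbd i k M ω)
  have hrP : (0:ℝ) < r ^ P := pow_pos hr0 P
  -- eventual bound on |ASup M - AStor|
  have hconc : ∀ᶠ M : ℕ in atTop, |ASup M - AStor| ≤
      (1/(N:ℝ)) * (CC * (((K:ℝ)*(N:ℝ)) * Real.sqrt (2/(M:ℝ))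
        + (K:ℝ) * ((1 - r^2)/((M:ℝ)*r) * N))) := by
    filter_upwards [eventually_ge_atTop 1] with M hM1
    obtain ⟨hRpos, hsr, hssq, hrpow, hsD⟩ := hsfact M hM1
    have hMr : (1:ℝ) ≤ (M:ℝ) := by exact_mod_cast hM1
    have hM0 : (0:ℝ) < (M:ℝ) := by linarith
    have hs0 : 0 < Real.sqrt (R M) := lt_of_lt_of_le hr0 hsr
    have hD0 : 0 ≤ (1 - r^2)/((M:ℝ)*r) := div_nonneg (by linarith) (by positivity)
    have hcM : β' / (2 * (N:ℝ) ^ (P - 1) * R M ^ ((P:ℝ)/2)) = c / Real.sqrt (R M) ^ P := by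
      rw [hrpow, hcdef, div_div]
    have hcoefF : |β' / (2 * (N:ℝ) ^ (P - 1) * R M ^ ((P:ℝ)/2))| ≤ c / r ^ P := by
      rw [hcM, abs_of_pos (by positivity)]
      exact div_le_div₀ hc.le le_rfl hrP (pow_le_pow_left₀ hr0.le hsr P)
    have hcoefG : |β' / (2 * (N:ℝ) ^ (P - 1))| ≤ c / r ^ P := by
      rw [show β' / (2 * (N:ℝ) ^ (P - 1)) = c from hcdef.symm, abs_of_pos hc,
        le_div_iff₀ hrP]
      exact mul_le_of_le_one_right hc.le (pow_le_one₀ hr0.le hr1)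
    have hEnergy : ∀ (co : ℝ) (W : Fin K → ℝ), |co| ≤ c / r^P → (∀ k, |W k| ≤ (N:ℝ)) →
        |co * ∑ k : Fin K, (W k)^P| ≤ c / r^P * ((K:ℝ) * (N:ℝ)^P) := by
      intro co W hco hW
      rw [abs_mul]
      refine mul_le_mul hco ?_ (abs_nonneg _) (by positivity)
      refine le_trans (Finset.abs_sum_le_sum_abs _ _) ?_
      calc ∑ k : Fin K, |W k ^ P| ≤ ∑ _k : Fin K, (N:ℝ)^P := by
            refine Finset.sum_le_sum fun k _ => ?_
            rw [abs_pow]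
            exact pow_le_pow_left₀ (abs_nonneg _) (hW k) P
        _ = (K:ℝ) * (N:ℝ)^P := by simp [mul_comm]
    have hmbd : ∀ i k ω, |(1/(M:ℝ)) * ∑ a ∈ Finset.range M, η i k a ω| ≤ 1 := by
      intro i k ω
      rw [abs_mul, abs_of_pos (by positivity : (0:ℝ) < 1/(M:ℝ))]
      have h1 : |∑ a ∈ Finset.range M, η i k a ω| ≤ (M:ℝ) := by
        refine le_trans (Finset.abs_sum_le_sum_abs _ _) ?_
        calc ∑ a ∈ Finset.range M, |η i k a ω| ≤ ∑ _a ∈ Finset.range M, 1 := by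
              refine Finset.sum_le_sum fun a _ => ?_
              rw [hη i k a ω, abs_mul]
              exact mul_le_one₀ (hχbd i k a ω) (abs_nonneg _) (hξbd i k ω)
          _ = (M:ℝ) := by simp
      calc (1/(M:ℝ)) * |∑ a ∈ Finset.range M, η i k a ω| ≤ (1/(M:ℝ)) * (M:ℝ) := by gcongr
        _ = 1 := by field_simp
    have hFbd : ∀ ω, |Real.log (∑ σ : Fin N → Bool, Real.exp
        ((β' / (2 * (N:ℝ) ^ (P - 1) * R M ^ ((P:ℝ)/2))) *
          ∑ k : Fin K, (∑ i : Fin N, ((1/(M:ℝ)) * ∑ a ∈ Finset.range M, η i k a ω)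
            * spin (σ i)) ^ P))|
        ≤ c / r ^ P * ((K:ℝ) * (N:ℝ)^P)
          + |Real.log ((Fintype.card (Fin N → Bool) : ℝ))| := by
      intro ω
      refine log_partition_bd _ _ (fun σ => ?_)
      refine hEnergy _ _ hcoefF (fun k => habs_sum _ (fun i => ?_))
      rw [abs_mul]
      exact mul_le_one₀ (hmbd i k ω) (abs_nonneg _) (hspin (σ i))
    have hGbd : ∀ ω, |Real.log (∑ σ : Fin N → Bool, Real.exp
        ((β' / (2 * (N:ℝ) ^ (P - 1))) *
          ∑ k : Fin K, (∑ i : Fin N, ξ i k ω * spin (σ i)) ^ P))|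
        ≤ c / r ^ P * ((K:ℝ) * (N:ℝ)^P)
          + |Real.log ((Fintype.card (Fin N → Bool) : ℝ))| := by
      intro ω
      refine log_partition_bd _ _ (fun σ => ?_)
      refine hEnergy _ _ hcoefG (fun k => habs_sum _ (fun i => ?_))
      rw [abs_mul]
      exact mul_le_one₀ (hξbd i k ω) (abs_nonneg _) (hspin (σ i))
    have hFint : Integrable (fun ω => Real.log (∑ σ : Fin N → Bool, Real.exp
        ((β' / (2 * (N:ℝ) ^ (P - 1) * R M ^ ((P:ℝ)/2))) *
          ∑ k : Fin K, (∑ i : Fin N, ((1/(M:ℝ)) * ∑ a ∈ Finset.range M, η i k a ω)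
            * spin (σ i)) ^ P))) μ :=
      integrable_of_bdd (hFmeas M) _ hFbd
    have hGint : Integrable (fun ω => Real.log (∑ σ : Fin N → Bool, Real.exp
        ((β' / (2 * (N:ℝ) ^ (P - 1))) *
          ∑ k : Fin K, (∑ i : Fin N, ξ i k ω * spin (σ i)) ^ P))) μ :=
      integrable_of_bdd hGmeas _ hGbd
    have hHmeas : Measurable (fun ω => CC * ((∑ k : Fin K, ∑ i : Fin N,
        |(1/(M:ℝ)) * ∑ a ∈ Finset.range M, (χ i k a ω - r)|)
        + (K:ℝ) * ((1 - r^2)/((M:ℝ)*r) * N))) :=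
      ((Finset.measurable_sum _ fun k _ => Finset.measurable_sum _ fun i _ =>
        (hSmeas i k M).abs).add measurable_const).const_mul _
    have hHbd : ∀ ω, |CC * ((∑ k : Fin K, ∑ i : Fin N,
        |(1/(M:ℝ)) * ∑ a ∈ Finset.range M, (χ i k a ω - r)|)
        + (K:ℝ) * ((1 - r^2)/((M:ℝ)*r) * N))|
        ≤ CC * ((K:ℝ)*(N:ℝ)*2 + (K:ℝ) * ((1 - r^2)/((M:ℝ)*r) * N)) := by
      intro ω
      rw [abs_mul, abs_of_nonneg hCC0]
      refine mul_le_mul_of_nonneg_left ?_ hCC0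
      rw [abs_of_nonneg (add_nonneg (Finset.sum_nonneg fun k _ =>
        Finset.sum_nonneg fun i _ => abs_nonneg _) (by positivity))]
      refine add_le_add ?_ le_rfl
      calc ∑ k : Fin K, ∑ i : Fin N, |(1/(M:ℝ)) * ∑ a ∈ Finset.range M, (χ i k a ω - r)|
          ≤ ∑ _k : Fin K, ∑ _i : Fin N, (2:ℝ) :=
            Finset.sum_le_sum fun k _ => Finset.sum_le_sum fun i _ => hSbd i k M ω
        _ = (K:ℝ)*(N:ℝ)*2 := by simp [Finset.sum_const]; ring
    have hHint : Integrable (fun ω => CC * ((∑ k : Fin K, ∑ i : Fin N,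
        |(1/(M:ℝ)) * ∑ a ∈ Finset.range M, (χ i k a ω - r)|)
        + (K:ℝ) * ((1 - r^2)/((M:ℝ)*r) * N))) μ :=
      integrable_of_bdd hHmeas _ hHbd
    rw [hASup M, hAStor, ← mul_sub, abs_mul,
      abs_of_nonneg (by positivity : (0:ℝ) ≤ 1/(N:ℝ))]
    refine mul_le_mul_of_nonneg_left ?_ (by positivity : (0:ℝ) ≤ 1/(N:ℝ))
    rw [← integral_sub hFint hGint]
    refine le_trans (abs_integral_le μ _) ?_
    refine le_trans (integral_mono ((hFint.sub hGint).abs) hHint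
      (fun ω => hmain M hM1 ω)) ?_
    have hHeq : (∫ ω, CC * ((∑ k : Fin K, ∑ i : Fin N,
          |(1/(M:ℝ)) * ∑ a ∈ Finset.range M, (χ i k a ω - r)|)
          + (K:ℝ) * ((1 - r^2)/((M:ℝ)*r) * N)) ∂μ)
        = CC * ((∑ k : Fin K, ∑ i : Fin N, ∫ ω,
            |(1/(M:ℝ)) * ∑ a ∈ Finset.range M, (χ i k a ω - r)| ∂μ)
          + (K:ℝ) * ((1 - r^2)/((M:ℝ)*r) * N)) := by
      rw [integral_const_mul]
      congr 1
      rw [integral_add (integrable_finset_sum _ fun k _ =>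
          integrable_finset_sum _ fun i _ => hSint i k M) (integrable_const _),
        integral_finset_sum _ (fun k _ => integrable_finset_sum _ fun i _ => hSint i k M)]
      congr 1
      · exact Finset.sum_congr rfl fun k _ => integral_finset_sum _ fun i _ => hSint i k M
      · rw [integral_const]; simp
    rw [hHeq]
    refine mul_le_mul_of_nonneg_left (add_le_add ?_ le_rfl) hCC0
    calc ∑ k : Fin K, ∑ i : Fin N, ∫ ω,
          |(1/(M:ℝ)) * ∑ a ∈ Finset.range M, (χ i k a ω - r)| ∂μ
        ≤ ∑ _k : Fin K, ∑ _i : Fin N, Real.sqrt (2/(M:ℝ)) :=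
          Finset.sum_le_sum fun k _ => Finset.sum_le_sum fun i _ => hEabsS i k M hM1
      _ = (K:ℝ)*(N:ℝ)*Real.sqrt (2/(M:ℝ)) := by simp [Finset.sum_const]; ring
  -- the bounding sequence tends to zero
  have hlim : Tendsto (fun M : ℕ => (1/(N:ℝ)) * (CC * (((K:ℝ)*(N:ℝ)) * Real.sqrt (2/(M:ℝ))
      + (K:ℝ) * ((1 - r^2)/((M:ℝ)*r) * N)))) atTop (nhds 0) := by
    have h1 : Tendsto (fun M : ℕ => Real.sqrt (2/(M:ℝ))) atTop (nhds 0) := by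
      have h := (Real.continuous_sqrt.tendsto 0).comp (tendsto_const_div_atTop_nhds_zero_nat 2)
      simpa only [Function.comp_def, Real.sqrt_zero] using h
    have h2 : Tendsto (fun M : ℕ => (1 - r^2)/((M:ℝ)*r)) atTop (nhds 0) := by
      have heq : (fun M : ℕ => (1 - r^2)/((M:ℝ)*r)) = fun M : ℕ => ((1 - r^2)/r)/(M:ℝ) := by
        funext M
        rw [div_div, mul_comm]
      rw [heq]
      exact tendsto_const_div_atTop_nhds_zero_nat _
    have h3 := (((h1.const_mul ((K:ℝ)*(N:ℝ))).add
      ((h2.mul_const (N:ℝ)).const_mul (K:ℝ))).const_mul CC).const_mul (1/(N:ℝ))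
    simpa using h3
  rw [← tendsto_sub_nhds_zero_iff]
  exact squeeze_zero_norm' (by simpa [Real.norm_eq_abs] using hconc) hlim
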